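/- arXiv:1010.0120 — 4 statements merged into one kernel-verified Lean document; each statement's English description precedes it below -/
import Mathlib

section
/- Let k = 𝔽_q be a finite field with q elements and let f ∈ k[X]. The following are equivalent: (a) f(X + a) = f(X) as polynomials for every a ∈ k; (b) there exists g ∈ k[X] such that f(X) = g(X^q − X). -/
/-!
Translation by `a` is the ring automorphism `taylor a` of `k[X]`, and it fixes `π = X ^ q - X`
because `(X + a) ^ q = X ^ q + a ^ q = X ^ q + a`. Dividing an invariant `f` by the monic `π`, the
uniqueness of division with remainder makes quotient and remainder invariant as well. An
invariant polynomial `r` of degree `< q` takes the value `r(0)` at all `q` points of `k`, hence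
is constant; by induction on the degree the quotient is a polynomial in `π`, and then so is `f`.
-/

open Polynomial Finset

namespace Polynomial

variable {R : Type*} [CommRing R]

theorem taylor_divByMonic_modByMonic {p : R[X]} (hp : p.Monic) (f : R[X]) (r : R) :
    taylor r (f /ₘ p) = taylor r f /ₘ taylor r p ∧
      taylor r (f %ₘ p) = taylor r f %ₘ taylor r p := by
  nontriviality R
  have hp' : (taylor r p).Monic := by rw [Monic, leadingCoeff_taylor]; exact hp
  refine (div_modByMonic_unique _ _ hp' ⟨?_, ?_⟩).imp Eq.symm Eq.symm
  · rw [← taylor_mul, ← map_add, modByMonic_add_div]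
  · rw [degree_taylor, degree_taylor]
    exact degree_modByMonic_lt f hp

theorem eq_C_eval_zero_of_forall_taylor_eq_self [IsDomain R] {p : R[X]} (s : Finset R)
    (hs : p.natDegree < #s) (hp : ∀ a ∈ s, taylor a p = p) : p = C (p.eval 0) := by
  refine eq_of_natDegree_lt_card_of_eval_eq' _ _ s (fun a ha => ?_) (by simpa using hs)
  simpa [taylor_eval] using congrArg (eval 0) (hp a ha)

theorem exists_eq_comp_of_forall_taylor_eq_self [IsDomain R] (s : Finset R) {π : R[X]}
    (hπ : π.Monic) (hπ_pos : 0 < π.natDegree) (hπ_le : π.natDegree ≤ #s)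
    (hπ_inv : ∀ a ∈ s, taylor a π = π) {f : R[X]} (hf : ∀ a ∈ s, taylor a f = f) :
    ∃ g : R[X], f = g.comp π := by
  induction hn : f.natDegree using Nat.strong_induction_on generalizing f with
  | _ n ih =>
  by_cases hlt : n < π.natDegree
  · refine ⟨C (f.eval 0), ?_⟩
    rw [C_comp]
    exact eq_C_eval_zero_of_forall_taylor_eq_self s (by omega) hf
  have hq_inv : ∀ a ∈ s, taylor a (f /ₘ π) = f /ₘ π := fun a ha => by
    rw [(taylor_divByMonic_modByMonic hπ f a).1, hf a ha, hπ_inv a ha]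
  have hr_inv : ∀ a ∈ s, taylor a (f %ₘ π) = f %ₘ π := fun a ha => by
    rw [(taylor_divByMonic_modByMonic hπ f a).2, hf a ha, hπ_inv a ha]
  obtain ⟨g, hg⟩ := ih _ (by rw [← hn, natDegree_divByMonic _ hπ]; omega) hq_inv rfl
  have hπ_ne_one : π ≠ 1 := fun h => by simp [h] at hπ_pos
  have hr : f %ₘ π = C ((f %ₘ π).eval 0) := eq_C_eval_zero_of_forall_taylor_eq_self s
    ((natDegree_modByMonic_lt f hπ hπ_ne_one).trans_le hπ_le) hr_inv
  refine ⟨X * g + C ((f %ₘ π).eval 0), ?_⟩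
  rw [add_comp, mul_comp, X_comp, C_comp, ← hg, ← hr, add_comm, modByMonic_add_div]

end Polynomial

namespace FiniteField

variable {k : Type*} [Field k] [Fintype k]

theorem taylor_X_pow_card_sub_X (a : k) :
    taylor a (X ^ Fintype.card k - X) = X ^ Fintype.card k - X := by
  rw [map_sub, taylor_X_pow, taylor_X, ← expand_card, map_add, expand_X, expand_C]
  ring

end FiniteField

/-- For `k = 𝔽_q` and `f ∈ k[X]`, `f(X + a) = f(X)` for all `a ∈ k`
iff `f(X) = g(X^q - X)` for some `g ∈ k[X]`. -/
theorem stmt0 {k : Type*} [Field k] [Fintype k] (q : ℕ) (hq : Fintype.card k = q)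
    (f : Polynomial k) :
    (∀ a : k, f.comp (X + C a) = f) ↔ ∃ g : Polynomial k, f = g.comp (X ^ q - X) := by
  subst hq
  have hdeg : (X ^ Fintype.card k - X : k[X]).natDegree = Fintype.card k :=
    FiniteField.X_pow_card_sub_X_natDegree_eq k Fintype.one_lt_card
  simp only [← taylor_apply]
  constructor
  · intro hf
    refine exists_eq_comp_of_forall_taylor_eq_self univ ?_ ?_ ?_
      (fun a _ => FiniteField.taylor_X_pow_card_sub_X a) (fun a _ => hf a)
    · exact monic_X_pow_sub (by rw [degree_X]; exact_mod_cast Fintype.one_lt_card)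
    · rw [hdeg]; exact Fintype.card_pos
    · rw [hdeg, card_univ]
  · rintro ⟨g, rfl⟩ a
    rw [taylor_apply, comp_assoc, ← taylor_apply, FiniteField.taylor_X_pow_card_sub_X]
end

section
/- Let k = 𝔽_q be a finite field, r ≥ 1, e ≥ 1 a divisor of q − 1, g ∈ k_r[X], f(X) = g(X^{(q−1)/e}), and ψ : k → ℂ a nontrivial additive character. Then ∑_{x ∈ k_r} ψ(Tr(f(x))) = ψ(Tr(g(0))) + ((q−1)/e) · ∑_{μ ∈ kˣ, μ^e = 1} ∑_{x ∈ k_rˣ, N(x) = μ} ψ(Tr(g(x))). -/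
/-!
Split off `x = 0`. The unit group `k_rˣ` is cyclic, so `x ↦ x ^ d` with `d = (q - 1) / e` is
`d`-to-one onto the `z` with `z ^ ((q ^ r - 1) / d) = 1`. As `N(z) = z ^ ((q ^ r - 1) / (q - 1))`
and `(q ^ r - 1) / d = e (q ^ r - 1) / (q - 1)`, these are exactly the `z` with `N(z) ^ e = 1`;
sorting them by the value of their norm gives the double sum.
-/

open Finset

theorem Nat.div_div_eq_div_mul_of_dvd {a b c : ℕ} (hba : b ∣ a) (hcb : c ∣ b) (hb : b ≠ 0) :
    a / (b / c) = a / b * c := by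
  obtain ⟨m, rfl⟩ := hba
  obtain ⟨n, rfl⟩ := hcb
  have hc : c ≠ 0 := left_ne_zero_of_mul hb
  have hn : n ≠ 0 := right_ne_zero_of_mul hb
  rw [Nat.mul_div_cancel_left n (Nat.pos_of_ne_zero hc),
    Nat.mul_div_cancel_left m (Nat.pos_of_ne_zero hb), mul_right_comm,
    Nat.mul_div_cancel _ (Nat.pos_of_ne_zero hn), mul_comm]

theorem Fintype.sum_eq_apply_zero_add_sum_units {G₀ M : Type*} [GroupWithZero G₀] [Fintype G₀]
    [Fintype G₀ˣ] [DecidableEq G₀] [AddCommMonoid M] (F : G₀ → M) :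
    ∑ x, F x = F 0 + ∑ u : G₀ˣ, F u := by
  rw [Fintype.sum_eq_add_sum_subtype_ne F 0,
    ← Fintype.sum_equiv unitsEquivNeZero _ _ fun _ => rfl]
  rfl

theorem MonoidHom.sum_comp_eq_card_ker_smul {G H M : Type*} [Group G] [Fintype G] [Monoid H]
    [DecidableEq H] [AddCommMonoid M] (φ : G →* H) (F : H → M) :
    ∑ x, F (φ x) = Nat.card φ.ker • ∑ y ∈ univ.image φ, F y := by
  rw [sum_comp, smul_sum]
  refine sum_congr rfl fun y hy => ?_
  obtain ⟨x, -, rfl⟩ := mem_image.1 hy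
  rw [card_fiber_eq_of_mem_range φ ⟨x, rfl⟩ ⟨1, map_one φ⟩, Nat.card_eq_fintype_card,
    Fintype.card_subtype]
  simp only [mem_ker]

theorem IsCyclic.image_pow_eq_filter_pow_eq_one {G : Type*} [CommGroup G] [Fintype G]
    [IsCyclic G] [DecidableEq G] {d : ℕ} (hd : d ∣ Fintype.card G) :
    univ.image (· ^ d) = ({z | z ^ (Fintype.card G / d) = 1} : Finset G) := by
  have hd0 : 0 < d := Nat.pos_of_dvd_of_pos hd Fintype.card_pos
  have hGd : 0 < Fintype.card G / d := Nat.div_pos (Nat.le_of_dvd Fintype.card_pos hd) hd0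
  refine eq_of_subset_of_card_le (fun z hz => ?_) ?_
  · obtain ⟨x, -, rfl⟩ := mem_image.1 hz
    rw [mem_filter, ← pow_mul, Nat.mul_div_cancel' hd]
    exact ⟨mem_univ _, pow_card_eq_one⟩
  · calc #{z | z ^ (Fintype.card G / d) = 1}
        ≤ Fintype.card G / d := card_pow_eq_one_le hGd
      _ = Nat.card (powMonoidHom d : G →* G).range := by
        rw [card_powMonoidHom_range, Nat.card_eq_fintype_card,
          Nat.gcd_eq_right hd]
      _ = #(univ.image (· ^ d)) := by
        rw [← SetLike.coe_sort_coe, MonoidHom.coe_range, Nat.card_eq_card_toFinset,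
          Set.toFinset_range]
        rfl

theorem IsCyclic.sum_comp_pow {G M : Type*} [CommGroup G] [Fintype G] [IsCyclic G]
    [DecidableEq G] [AddCommMonoid M] {d : ℕ} (hd : d ∣ Fintype.card G) (F : G → M) :
    ∑ x, F (x ^ d) = d • ∑ z with z ^ (Fintype.card G / d) = 1, F z := by
  have h := (powMonoidHom d : G →* G).sum_comp_eq_card_ker_smul F
  rw [card_powMonoidHom_ker, Nat.card_eq_fintype_card, Nat.gcd_eq_right hd] at h
  rw [← image_pow_eq_filter_pow_eq_one hd]
  exact h

theorem FiniteField.card_sub_one_dvd_card_sub_one (k K : Type*) [Field k] [Fintype k] [Field K]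
    [Fintype K] [Algebra k K] : Fintype.card k - 1 ∣ Fintype.card K - 1 := by
  rw [Module.card_eq_pow_finrank (K := k) (V := K)]
  exact Nat.sub_one_dvd_pow_sub_one _ _

theorem FiniteField.norm_pow_eq_one_iff {k K : Type*} [Field k] [Field K] [Algebra k K]
    [Finite K] (x : K) (n : ℕ) :
    Algebra.norm k x ^ n = 1 ↔ x ^ ((Nat.card K - 1) / (Nat.card k - 1) * n) = 1 := by
  rw [pow_mul, ← algebraMap_norm_eq_pow, ← map_pow (algebraMap k K),
    map_eq_one_iff _ (algebraMap k K).injective]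

theorem FiniteField.sum_filter_pow_eq_one_eq_sum_fiberwise_norm {k K M : Type*} [Field k]
    [Fintype k] [Field K] [Fintype K] [Algebra k K] [DecidableEq k] [DecidableEq K]
    [AddCommMonoid M] (e : ℕ) (F : Kˣ → M) :
    ∑ z ∈ univ.filter
        (fun z : Kˣ => z ^ ((Fintype.card K - 1) / (Fintype.card k - 1) * e) = 1), F z =
      ∑ μ ∈ univ.filter (fun μ : kˣ => μ ^ e = 1),
        ∑ x ∈ univ.filter (fun x : Kˣ => Algebra.norm k (x : K) = μ), F x := by
  set N : Kˣ →* kˣ := Units.map (Algebra.norm k : K →* k)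
  have hN : ∀ z : Kˣ,
      z ^ ((Fintype.card K - 1) / (Fintype.card k - 1) * e) = 1 ↔ N z ^ e = 1 := by
    intro z
    simp only [N, Units.ext_iff, Units.val_pow_eq_pow_val, Units.coe_map, Units.val_one,
      norm_pow_eq_one_iff, Nat.card_eq_fintype_card]
  rw [← sum_fiberwise_of_maps_to (g := N) (t := {μ : kˣ | μ ^ e = 1})
    fun z hz => by simpa [hN] using hz]
  refine sum_congr rfl fun μ hμ => sum_congr (Finset.ext fun x => ?_) fun _ _ => rfl
  simp only [mem_filter, mem_univ, true_and] at hμ ⊢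
  have hx : N x = μ ↔ Algebra.norm k (x : K) = μ := Units.ext_iff
  rw [hN, ← hx]
  exact ⟨And.right, fun h => ⟨h ▸ hμ, h⟩⟩

open Polynomial

open scoped Classical in
theorem stmt4_general {k K : Type*} [Field k] [Fintype k] [Field K] [Fintype K] [Algebra k K]
    (q e : ℕ) (hq : Fintype.card k = q)
    (hdvd : e ∣ q - 1)
    (g f : Polynomial K) (hf : f = g.comp (X ^ ((q - 1) / e)))
    (ψ : AddChar k ℂ) :
    ∑ x : K, ψ (Algebra.trace k K (f.eval x)) =
      ψ (Algebra.trace k K (g.eval 0)) +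
        (((q - 1) / e : ℕ) : ℂ) *
          ∑ μ ∈ Finset.univ.filter (fun μ : kˣ => μ ^ e = 1),
            ∑ x ∈ Finset.univ.filter (fun x : Kˣ => Algebra.norm k (x : K) = (μ : k)),
              ψ (Algebra.trace k K (g.eval (x : K))) := by
  subst hq hf
  set d := (Fintype.card k - 1) / e
  have hk := FiniteField.card_sub_one_dvd_card_sub_one k K
  have hd : d ∣ Fintype.card Kˣ := by
    rw [Fintype.card_units]
    exact (Nat.div_dvd_of_dvd hdvd).trans hk
  have hd0 : d ≠ 0 := ne_zero_of_dvd_ne_zero Fintype.card_ne_zero hd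
  have hexp : Fintype.card Kˣ / d = (Fintype.card K - 1) / (Fintype.card k - 1) * e := by
    rw [Fintype.card_units]
    exact Nat.div_div_eq_div_mul_of_dvd hk hdvd (Nat.sub_ne_zero_of_lt Fintype.one_lt_card)
  simp only [eval_comp, eval_pow, eval_X]
  rw [Fintype.sum_eq_apply_zero_add_sum_units, zero_pow hd0]
  simp only [← Units.val_pow_eq_pow_val]
  rw [IsCyclic.sum_comp_pow (F := fun z : Kˣ => ψ (Algebra.trace k K (g.eval (z : K)))) hd,
    hexp, nsmul_eq_mul, FiniteField.sum_filter_pow_eq_one_eq_sum_fiberwise_norm]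

open scoped Classical in
/-- For `f(X) = g(X^{(q−1)/e})`,
`∑_{x ∈ k_r} ψ(Tr(f(x))) = ψ(Tr(g(0))) + ((q−1)/e) ∑_{μ^e = 1} ∑_{N(x) = μ} ψ(Tr(g(x)))`. -/
theorem stmt4 {k K : Type*} [Field k] [Fintype k] [Field K] [Fintype K] [Algebra k K]
    (q r e : ℕ) (hq : Fintype.card k = q) (hr : 1 ≤ r) (hK : Fintype.card K = q ^ r)
    (he : 1 ≤ e) (hdvd : e ∣ q - 1)
    (g f : Polynomial K) (hf : f = g.comp (X ^ ((q - 1) / e)))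
    (ψ : AddChar k ℂ) (hψ : ψ ≠ 1) :
    ∑ x : K, ψ (Algebra.trace k K (f.eval x)) =
      ψ (Algebra.trace k K (g.eval 0)) +
        (((q - 1) / e : ℕ) : ℂ) *
          ∑ μ ∈ Finset.univ.filter (fun μ : kˣ => μ ^ e = 1),
            ∑ x ∈ Finset.univ.filter (fun x : Kˣ => Algebra.norm k (x : K) = (μ : k)),
              ψ (Algebra.trace k K (g.eval (x : K))) :=
  stmt4_general q e hq hdvd g f hf ψ
end

section
/- Let k be a field, let g ∈ k[X] have degree d ≥ 1, and define polynomials g_n ∈ k[X] by g_1 = g and g_{n+1}(X) = Res_t(g_n(t), g(X − t)), the resultant in the variable t. Then for every r ≥ 1 the polynomial g_r is nonzero, and the set of roots of g_r in an algebraic closure k̄ of k is exactly {a_1 + ⋯ + a_r : a_1, …, a_r ∈ k̄ are roots of g}. -/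
open Polynomial

/-- The Sylvester matrix of two polynomials `p`, `q` over a commutative ring: a square
matrix of size `q.natDegree + p.natDegree`, whose first `q.natDegree` rows are the shifts
of the coefficients of `p` and whose remaining `p.natDegree` rows are the shifts of the
coefficients of `q`. -/
noncomputable def sylvesterMatrix {R : Type*} [CommRing R] (p q : Polynomial R) :
    Matrix (Fin (q.natDegree + p.natDegree)) (Fin (q.natDegree + p.natDegree)) R :=
  Matrix.of fun i j =>
    if (i : ℕ) < q.natDegree then
      (if (j : ℕ) ≤ p.natDegree + (i : ℕ) then p.coeff (p.natDegree + (i : ℕ) - (j : ℕ))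
        else 0)
    else
      (if (j : ℕ) ≤ (i : ℕ) then q.coeff ((i : ℕ) - (j : ℕ)) else 0)

/-- The resultant of two polynomials, as the determinant of their Sylvester matrix. -/
noncomputable def resultant {R : Type*} [CommRing R] (p q : Polynomial R) : R :=
  (sylvesterMatrix p q).det

/-
The resultant over `k[X]` specialises under `X ↦ x` to the resultant over `k̄` (the Sylvester
determinant used here is Mathlib's `Polynomial.resultant` up to a sign), so `g_{n+1}(x) = 0`
iff `g_n(t)` and `g(x - t)` have a common root `t ∈ k̄`. Hence the roots of `g_{n+1}` are the
sums of a root of `g_n` and a root of `g`, and induction gives the `r`-fold sums. Moreover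
`g_{n+1} ≠ 0`: otherwise every element of the infinite field `k̄` would be such a sum, of which
there are finitely many.
-/

open Pointwise

def Fin.blockRevPerm (m n : ℕ) : Equiv.Perm (Fin (m + n)) :=
  finSumFinEquiv.symm.trans ((Equiv.sumCongr Fin.revPerm Fin.revPerm).trans finSumFinEquiv)

section Sylvester

variable {R : Type*} [CommRing R]

theorem sylvesterMatrix_eq_submatrix_sylvester (p q : R[X]) :
    sylvesterMatrix p q =
      (Polynomial.sylvester q p q.natDegree p.natDegree).transpose.submatrix
        (Fin.blockRevPerm q.natDegree p.natDegree) Fin.revPerm := by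
  ext i j
  have hj := j.is_lt
  induction i using Fin.addCases with
  | left i =>
    have hi := i.is_lt
    simp only [sylvesterMatrix, Fin.blockRevPerm, Polynomial.sylvester, Matrix.submatrix_apply,
      Matrix.transpose_apply, Matrix.of_apply, Equiv.trans_apply, Equiv.sumCongr_apply,
      finSumFinEquiv_symm_apply_castAdd, Sum.map_inl, finSumFinEquiv_apply_left,
      Fin.addCases_left, Fin.val_castAdd, Fin.revPerm_apply, Fin.val_rev, Set.mem_Icc]
    split_ifs with h₁ h₂ h₂
    · congr 1; omega
    · exact coeff_eq_zero_of_natDegree_lt (by omega)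
    · omega
    · rfl
  | right i =>
    have hi := i.is_lt
    simp only [sylvesterMatrix, Fin.blockRevPerm, Polynomial.sylvester, Matrix.submatrix_apply,
      Matrix.transpose_apply, Matrix.of_apply, Equiv.trans_apply, Equiv.sumCongr_apply,
      finSumFinEquiv_symm_apply_natAdd, Sum.map_inr, finSumFinEquiv_apply_right,
      Fin.addCases_right, Fin.val_natAdd, Fin.revPerm_apply, Fin.val_rev, Set.mem_Icc]
    rw [if_neg (by omega)]
    split_ifs with h₁ h₂ h₂
    · congr 1; omega
    · exact coeff_eq_zero_of_natDegree_lt (by omega)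
    · omega
    · rfl

theorem Matrix.associated_det_submatrix {n : Type*} [Fintype n] [DecidableEq n]
    (M : Matrix n n R) (σ τ : Equiv.Perm n) : Associated (M.submatrix σ τ).det M.det := by
  have hM : M.submatrix σ τ = (M.submatrix id (σ.symm.trans τ)).submatrix σ σ := by
    ext i j; simp
  rw [hM, Matrix.det_submatrix_equiv_self, Matrix.det_permute']
  exact associated_unit_mul_left _ _ ((Units.isUnit _).map (Int.castRingHom R))

theorem associated_resultant (p q : R[X]) :
    Associated (_root_.resultant p q) (Polynomial.resultant p q) := by
  rw [_root_.resultant, sylvesterMatrix_eq_submatrix_sylvester, Polynomial.resultant_comm]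
  refine (Matrix.associated_det_submatrix _ _ _).trans ?_
  rw [Matrix.det_transpose]
  exact (associated_unit_mul_left _ _ (isUnit_neg_one.pow _)).symm

end Sylvester

theorem Polynomial.resultant_eq_zero_iff_exists_isRoot {K : Type*} [Field K] [IsAlgClosed K]
    {f g : K[X]} (h : f ≠ 0 ∨ g ≠ 0) :
    Polynomial.resultant f g = 0 ↔ ∃ x, f.IsRoot x ∧ g.IsRoot x := by
  rw [resultant_eq_zero_iff, isCoprime_iff_aeval_ne_zero_of_isAlgClosed (k := K) K]
  simp [h]

section Translate

variable {k : Type*} [CommRing k]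

theorem Polynomial.natDegree_C_sub_X [Nontrivial k] (a : k) : (C a - X).natDegree = 1 := by
  rw [natDegree_sub_eq_right_of_natDegree_lt] <;> simp

theorem Polynomial.aeval_C_X_sub_X_eq_comp (g : k[X]) :
    aeval (C X - X : k[X][X]) g = (g.map C).comp (C X - X) := by
  rw [comp, eval₂_map, aeval_def]
  rfl

theorem Polynomial.map_aeval_C_X_sub_X {S : Type*} [CommRing S] (φ : k[X] →+* S) (g : k[X]) :
    (aeval (C X - X : k[X][X]) g).map φ = (g.map (φ.comp C)).comp (C (φ X) - X) := by
  rw [aeval_C_X_sub_X_eq_comp, map_comp, map_map]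
  simp

theorem Polynomial.natDegree_aeval_C_X_sub_X [IsDomain k] (g : k[X]) :
    (aeval (C X - X : k[X][X]) g).natDegree = g.natDegree := by
  rw [aeval_C_X_sub_X_eq_comp, natDegree_comp, natDegree_map_eq_of_injective C_injective,
    natDegree_C_sub_X, mul_one]

end Translate

section Evaluation

variable {k K : Type*} [Field k] [Field K] [Algebra k K]

theorem aeval_resultant_map_C_aeval_C_X_sub_X (x : K) (g h : k[X]) :
    aeval x (Polynomial.resultant (h.map C) (aeval (C X - X : k[X][X]) g)) =
      Polynomial.resultant (h.map (algebraMap k K)) ((g.map (algebraMap k K)).comp (C x - X)) := by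
  set ψ : k[X] →+* K := (aeval x).toRingHom
  have hψC : ψ.comp C = algebraMap k K := by ext; simp [ψ]
  have hP : (h.map C).map ψ = h.map (algebraMap k K) := by rw [map_map, hψC]
  have hQ : (aeval (C X - X : k[X][X]) g).map ψ = (g.map (algebraMap k K)).comp (C x - X) := by
    rw [map_aeval_C_X_sub_X, hψC]; simp [ψ]
  change ψ _ = _
  rw [← resultant_map_map, hP, hQ]
  congr 1
  · rw [natDegree_map_eq_of_injective C_injective, natDegree_map]
  · rw [natDegree_aeval_C_X_sub_X, natDegree_comp, natDegree_map, natDegree_C_sub_X, mul_one]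

theorem setOf_aeval_resultant_eq_add [IsAlgClosed K] (g : k[X]) {h : k[X]} (hh : h ≠ 0) :
    {x : K | aeval x (_root_.resultant (h.map C) (aeval (C X - X : k[X][X]) g)) = 0} =
      {t : K | aeval t h = 0} + {s : K | aeval s g = 0} := by
  ext x
  have hmap : h.map (algebraMap k K) ≠ 0 :=
    (Polynomial.map_ne_zero_iff (algebraMap k K).injective).mpr hh
  simp only [Set.mem_ofPred_eq, Set.mem_add]
  rw [((associated_resultant (h.map C) (aeval (C X - X : k[X][X]) g)).map (aeval x)).eq_zero_iff,
    aeval_resultant_map_C_aeval_C_X_sub_X, resultant_eq_zero_iff_exists_isRoot (Or.inl hmap)]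
  simp only [IsRoot.def, eval_comp, eval_map_algebraMap, eval_sub, eval_C, eval_X]
  constructor
  · rintro ⟨t, ht, hxt⟩
    exact ⟨t, ht, x - t, hxt, add_sub_cancel t x⟩
  · rintro ⟨t, ht, s, hs, rfl⟩
    exact ⟨t, ht, by rwa [add_sub_cancel_left]⟩

theorem Polynomial.finite_setOf_aeval_eq_zero {p : k[X]} (hp : p ≠ 0) :
    {x : K | aeval x p = 0}.Finite := by
  convert (p.rootSet_finite K)
  ext
  exact (mem_rootSet_of_ne hp).symm

end Evaluation

/-- with `g_1 = g` and `g_{n+1}(X) = Res_t(g_n(t), g(X − t))`, for every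
`r ≥ 1` the polynomial `g_r` is nonzero and its roots in an algebraic closure are exactly
the sums of `r` roots of `g`. -/
theorem stmt11 {k : Type*} [Field k] (g : Polynomial k) (d : ℕ) (hgd : g.natDegree = d)
    (hd1 : 1 ≤ d)
    (G : ℕ → Polynomial k) (hG1 : G 1 = g)
    (hGsucc : ∀ n, 1 ≤ n →
      G (n + 1) = _root_.resultant ((G n).map (Polynomial.C : k →+* Polynomial k))
        (Polynomial.aeval
          (Polynomial.C Polynomial.X - Polynomial.X : Polynomial (Polynomial k)) g)) :
    ∀ r, 1 ≤ r → G r ≠ 0 ∧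
      {x : AlgebraicClosure k | Polynomial.aeval x (G r) = 0} =
        {x : AlgebraicClosure k | ∃ a : Fin r → AlgebraicClosure k,
          (∀ i, Polynomial.aeval (a i) g = 0) ∧ x = ∑ i, a i} := by
  set S := {x : AlgebraicClosure k | aeval x g = 0}
  have hg : g ≠ 0 := ne_zero_of_natDegree_gt (n := 0) (by omega)
  suffices H :
      ∀ r, 1 ≤ r → G r ≠ 0 ∧ {x : AlgebraicClosure k | aeval x (G r) = 0} = r • S by
    intro r hr
    refine ⟨(H r hr).1, (H r hr).2.trans ?_⟩
    ext x
    simp only [Set.mem_nsmul_iff_sum, Set.mem_ofPred_eq]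
    exact exists_congr fun a => and_congr_right' eq_comm
  intro r hr
  induction r, hr using Nat.le_induction with
  | base => exact ⟨hG1 ▸ hg, by rw [hG1, one_nsmul]⟩
  | succ n hn ih =>
    obtain ⟨hGn, hroots⟩ := ih
    have hstep : {x : AlgebraicClosure k | aeval x (G (n + 1)) = 0} =
        {x | aeval x (G n) = 0} + S := by
      rw [hGsucc n hn]
      exact setOf_aeval_resultant_eq_add g hGn
    refine ⟨fun h0 => Set.infinite_univ (α := AlgebraicClosure k) ?_,
      by rw [hstep, hroots, succ_nsmul]⟩
    have hfin := (finite_setOf_aeval_eq_zero (K := AlgebraicClosure k) hGn).add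
      (finite_setOf_aeval_eq_zero hg)
    rw [← hstep, h0] at hfin
    simpa using hfin
end

section
/- Let k = 𝔽_q be a finite field of odd characteristic p, let k_2 = 𝔽_{q²} be the quadratic extension of k, and let ρ : kˣ → ℂ be the quadratic character (the unique multiplicative character of order 2), extended by zero to all of k. Then the sum ∑_{x ∈ k_2, x^{q+1} = 1} ρ(N_{k_2/k}(x² + 1)) is a real number and is greater than or equal to q − 1. -/
/-!
For `x ∈ k₂` with `x ^ (q + 1) = 1` we have `N(x) = 1` and `x ^ q = x⁻¹`, so
`x² + 1 = x (x + x ^ q) = x · Tr(x)` and hence `N(x² + 1) = Tr(x)²`. Every term of the sum is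
therefore `ρ` of a square: it is `1`, except at the at most two roots of `x² = -1`, where it
is `0`. As `q + 1` divides `q² - 1 = |k₂ˣ|` and `k₂ˣ` is cyclic, there are exactly `q + 1`
such `x`, so the sum is a natural number at least `q - 1`.
-/

open Polynomial Finset Module

namespace FiniteField

variable {K : Type*} [Field K] [Fintype K]

theorem exists_isPrimitiveRoot_of_dvd_card_sub_one {n : ℕ} (hn : n ∣ Fintype.card K - 1) :
    ∃ ζ : K, IsPrimitiveRoot ζ n := by
  obtain ⟨g, hg⟩ := isCyclic_iff_exists_orderOf_eq_natCard.mp (inferInstance : IsCyclic Kˣ)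
  rw [Nat.card_units, Nat.card_eq_fintype_card] at hg
  obtain ⟨m, hm⟩ := hn
  have hm0 : m ≠ 0 := by
    rintro rfl
    have := Fintype.one_lt_card (α := K)
    omega
  have hζ := (IsPrimitiveRoot.coe_units_iff.mpr (hg ▸ IsPrimitiveRoot.orderOf g)).pow_of_dvd hm0
    (Dvd.intro_left n hm.symm)
  exact ⟨_, by rwa [hm, Nat.mul_div_cancel _ (Nat.pos_of_ne_zero hm0)] at hζ⟩

theorem card_nthRootsFinset_one_of_dvd {n : ℕ} (hn : n ∣ Fintype.card K - 1) :
    #(nthRootsFinset n (1 : K)) = n :=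
  (exists_isPrimitiveRoot_of_dvd_card_sub_one hn).choose_spec.card_nthRootsFinset

end FiniteField

theorem MulChar.apply_sq_of_sq_eq_one {F R : Type*} [Field F] [DecidableEq F] [CommRing R]
    [Nontrivial R] {χ : MulChar F R} (hχ : χ ^ 2 = 1) (a : F) :
    χ (a ^ 2) = if a = 0 then 0 else 1 := by
  split_ifs with ha
  · rw [ha, zero_pow two_ne_zero, χ.map_zero]
  · rw [map_pow, ← χ.pow_apply' two_ne_zero, hχ]
    exact MulChar.one_apply_coe (Units.mk0 a ha)

section QuadraticExtension

variable {k K : Type*} [Field k] [Field K] [Finite K] [Algebra k K]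

theorem algebraMap_norm_eq_pow_card_add_one (hK : finrank k K = 2) (x : K) :
    algebraMap k K (Algebra.norm k x) = x ^ (Nat.card k + 1) := by
  rw [FiniteField.algebraMap_norm_eq_pow_sum, hK, sum_range_succ, sum_range_one,
    pow_zero, pow_one, add_comm]

theorem algebraMap_trace_eq_add_pow_card (hK : finrank k K = 2) (x : K) :
    algebraMap k K (Algebra.trace k K x) = x + x ^ Nat.card k := by
  rw [FiniteField.algebraMap_trace_eq_sum_pow, hK, sum_range_succ, sum_range_one,
    pow_zero, pow_one, pow_one]

theorem sq_add_one_eq_algebraMap_trace_mul (hK : finrank k K = 2) {x : K}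
    (hx : x ^ (Nat.card k + 1) = 1) : x ^ 2 + 1 = algebraMap k K (Algebra.trace k K x) * x := by
  rw [algebraMap_trace_eq_add_pow_card hK, ← hx]
  ring

theorem norm_sq_add_one_eq_trace_sq (hK : finrank k K = 2) {x : K}
    (hx : x ^ (Nat.card k + 1) = 1) : Algebra.norm k (x ^ 2 + 1) = Algebra.trace k K x ^ 2 := by
  have hnorm : Algebra.norm k x = 1 := (algebraMap k K).injective <| by
    rw [algebraMap_norm_eq_pow_card_add_one hK, hx, map_one]
  rw [sq_add_one_eq_algebraMap_trace_mul hK hx, map_mul, Algebra.norm_algebraMap, hK, hnorm,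
    mul_one]

theorem card_filter_trace_eq_zero_le_two [DecidableEq k] (hK : finrank k K = 2) :
    #{x ∈ nthRootsFinset (Nat.card k + 1) (1 : K) | Algebra.trace k K x = 0} ≤ 2 := by
  classical
  calc #{x ∈ nthRootsFinset (Nat.card k + 1) (1 : K) | Algebra.trace k K x = 0}
      ≤ #(nthRootsFinset 2 (-1 : K)) := by
        refine card_le_card fun x hx => ?_
        obtain ⟨hx, htrace⟩ := mem_filter.mp hx
        have h := sq_add_one_eq_algebraMap_trace_mul hK
          ((mem_nthRootsFinset (Nat.succ_pos _) _).mp hx)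
        rw [htrace, map_zero, zero_mul] at h
        exact (mem_nthRootsFinset two_pos _).mpr (eq_neg_of_add_eq_zero_left h)
    _ ≤ 2 := by
        rw [nthRootsFinset_def]
        exact (Multiset.toFinset_card_le _).trans (card_nthRoots 2 _)

end QuadraticExtension

open scoped Classical in
theorem stmt19_general {k K : Type*} [Field k] [Fintype k] [Field K] [Fintype K] [Algebra k K]
    (q : ℕ) (hq : Fintype.card k = q)
    (hK : Fintype.card K = q ^ 2)
    (ρ : MulChar k ℂ) (hρ : orderOf ρ = 2) :
    ∃ s : ℝ,
      (∑ x ∈ Finset.univ.filter (fun x : K => x ^ (q + 1) = 1),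
          ρ (Algebra.norm k (x ^ 2 + 1))) = (s : ℂ) ∧
      (q : ℝ) - 1 ≤ s := by
  classical
  have hfinrank : finrank k K = 2 := by
    refine Nat.pow_right_injective (hq ▸ Fintype.one_lt_card) ?_
    simpa only [hK, hq] using (card_eq_pow_finrank (K := k) (V := K)).symm
  have hcard : Nat.card k = q := Nat.card_eq_fintype_card.trans hq
  have hρ_sq : ρ ^ 2 = 1 := hρ ▸ pow_orderOf_eq_one ρ
  refine ⟨#{x ∈ nthRootsFinset (q + 1) (1 : K) | Algebra.trace k K x ≠ 0}, ?_, ?_⟩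
  · rw [show univ.filter _ = nthRootsFinset (q + 1) (1 : K) by ext; simp]
    rw [sum_congr rfl fun x hx => by
      rw [norm_sq_add_one_eq_trace_sq hfinrank
          (hcard ▸ (mem_nthRootsFinset (Nat.succ_pos q) _).mp hx),
        MulChar.apply_sq_of_sq_eq_one hρ_sq]]
    simp [sum_ite]
  · have hdvd : q + 1 ∣ Fintype.card K - 1 :=
      ⟨q - 1, by rw [hK]; simpa using Nat.sq_sub_sq q 1⟩
    have hsplit := card_filter_add_card_filter_not (s := nthRootsFinset (q + 1) (1 : K))
      (fun x => Algebra.trace k K x = 0)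
    rw [FiniteField.card_nthRootsFinset_one_of_dvd hdvd] at hsplit
    have hzeros := hcard ▸ card_filter_trace_eq_zero_le_two (k := k) (K := K) hfinrank
    rw [sub_le_iff_le_add]
    exact_mod_cast (by omega : q ≤ _ + 1)

open scoped Classical in
/-- for `k = 𝔽_q` of odd characteristic, `k_2 = 𝔽_{q²}` and `ρ` the
quadratic character of `k`, the sum `∑_{x^{q+1} = 1} ρ(N_{k_2/k}(x² + 1))` is a real
number `≥ q − 1`. -/
theorem stmt19 {k K : Type*} [Field k] [Fintype k] [Field K] [Fintype K] [Algebra k K]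
    (p q : ℕ) (hp : p = ringChar k) (hodd : Odd p) (hq : Fintype.card k = q)
    (hK : Fintype.card K = q ^ 2)
    (ρ : MulChar k ℂ) (hρ : orderOf ρ = 2) :
    ∃ s : ℝ,
      (∑ x ∈ Finset.univ.filter (fun x : K => x ^ (q + 1) = 1),
          ρ (Algebra.norm k (x ^ 2 + 1))) = (s : ℂ) ∧
      (q : ℝ) - 1 ≤ s :=
  stmt19_general q hq hK ρ hρ
end
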